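/- arXiv:math/0608770 — 6 statements merged into one kernel-verified Lean document; each statement's English description precedes it below -/
import Mathlib

section
/- Let V be a finite-dimensional real vector space with a nondegenerate symmetric bilinear form g, and let p : V → V be a linear endomorphism of rank 1 with trace 1 that is g-symmetric (g(p X, Y) = g(X, p Y) for all X, Y). Then there exists P ∈ V with g(P,P) ≠ 0 such that p(X) = (g(P,X)/g(P,P))·P for all X. -/
/-- The observer idempotent associated to a vector `P`: `X ↦ (g P X / g P P) • P`. -/
noncomputable def obs {V : Type*} [AddCommGroup V] [Module ℝ V]
    (g : LinearMap.BilinForm ℝ V) (P : V) : V →ₗ[ℝ] V :=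
  (g P P)⁻¹ • ((LinearMap.toSpanSingleton ℝ V P).comp (g P))

/-- `g` has Lorentzian signature (−,+,+,+) on a 4-dimensional real space. -/
def IsMinkowski {V : Type*} [AddCommGroup V] [Module ℝ V]
    (g : LinearMap.BilinForm ℝ V) : Prop :=
  ∃ b : Module.Basis (Fin 4) ℝ V, ∀ i j, g (b i) (b j) =
    if i = j then (if i = (0 : Fin 4) then (-1 : ℝ) else 1) else 0

/-- The binary relative velocity operator `ϖ(x,y) = (y∘x)/tr(y∘x) − x`. -/
noncomputable def vel {V : Type*} [AddCommGroup V] [Module ℝ V]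
    (x y : V →ₗ[ℝ] V) : V →ₗ[ℝ] V :=
  (LinearMap.trace ℝ V (y ∘ₗ x))⁻¹ • (y ∘ₗ x) - x

/-!
A rank-one map is `X ↦ f X • v` for a functional `f` and a vector `v ≠ 0`, and its trace
is `f v`, so `f v = 1`. Testing `g`-symmetry on the pair `(v, Y)` gives `g v Y = f Y * g v v`; hence
`g v v = 0` would make `v` orthogonal to everything, and otherwise `f = g v · / g v v`.
-/

theorem LinearMap.exists_eq_smulRight_of_finrank_range_eq_one {K V W : Type*} [DivisionRing K]
    [AddCommGroup V] [Module K V] [AddCommGroup W] [Module K W] (p : V →ₗ[K] W)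
    (h : Module.finrank K (range p) = 1) :
    ∃ (f : V →ₗ[K] K) (v : W), v ≠ 0 ∧ p = f.smulRight v := by
  obtain ⟨⟨v, hv_mem⟩, hv0, -⟩ := finrank_eq_one_iff'.mp h
  have hv : v ≠ 0 := by simpa using hv0
  have hrange : range p = K ∙ v := eq_span_singleton_of_mem_of_finrank_eq_one h hv_mem hv
  let e := LinearEquiv.toSpanNonzeroSingleton K W v hv
  let q := p.codRestrict (K ∙ v) (fun x ↦ hrange ▸ mem_range_self p x)
  refine ⟨e.symm ∘ₗ q, v, hv, ext fun x ↦ ?_⟩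
  exact congrArg Subtype.val (e.apply_symm_apply (q x)).symm

namespace LinearMap.BilinForm

variable {R M : Type*} [CommSemiring R] [AddCommMonoid M] [Module R M]
  {g : LinearMap.BilinForm R M} {f : M →ₗ[R] R} {v : M}

theorem apply_eq_mul_self_of_isAdjointPair_smulRight
    (h : IsAdjointPair g g (f.smulRight v) (f.smulRight v)) (hfv : f v = 1) (Y : M) :
    g v Y = f Y * g v v := by
  simpa [hfv] using h v Y

theorem self_apply_ne_zero_of_isAdjointPair_smulRight (hg : g.SeparatingLeft)
    (h : IsAdjointPair g g (f.smulRight v) (f.smulRight v)) (hfv : f v = 1) (hv : v ≠ 0) :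
    g v v ≠ 0 := by
  intro hvv
  exact hv <| hg v fun Y ↦ by
    rw [apply_eq_mul_self_of_isAdjointPair_smulRight h hfv, hvv, mul_zero]

end LinearMap.BilinForm

theorem stmt_2_general (V : Type*) [AddCommGroup V] [Module ℝ V] [FiniteDimensional ℝ V]
    (g : LinearMap.BilinForm ℝ V)
    (hnd : g.Nondegenerate)
    (p : V →ₗ[ℝ] V)
    (hrank : Module.finrank ℝ (LinearMap.range p) = 1)
    (htr : LinearMap.trace ℝ V p = 1)
    (hgp : ∀ X Y : V, g (p X) Y = g X (p Y)) :
    ∃ P : V, g P P ≠ 0 ∧ ∀ X : V, p X = (g P X / g P P) • P := by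
  obtain ⟨f, v, hv, rfl⟩ := p.exists_eq_smulRight_of_finrank_range_eq_one hrank
  rw [LinearMap.trace_smulRight] at htr
  have hvv := LinearMap.BilinForm.self_apply_ne_zero_of_isAdjointPair_smulRight hnd.1 hgp htr hv
  refine ⟨v, hvv, fun X ↦ ?_⟩
  rw [LinearMap.smulRight_apply,
    LinearMap.BilinForm.apply_eq_mul_self_of_isAdjointPair_smulRight hgp htr,
    mul_div_cancel_right₀ _ hvv]

theorem stmt_2 (V : Type*) [AddCommGroup V] [Module ℝ V] [FiniteDimensional ℝ V]
    (g : LinearMap.BilinForm ℝ V) (hsymm : ∀ X Y : V, g X Y = g Y X)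
    (hnd : g.Nondegenerate)
    (p : V →ₗ[ℝ] V)
    (hrank : Module.finrank ℝ (LinearMap.range p) = 1)
    (htr : LinearMap.trace ℝ V p = 1)
    (hgp : ∀ X Y : V, g (p X) Y = g X (p Y)) :
    ∃ P : V, g P P ≠ 0 ∧ ∀ X : V, p X = (g P X / g P P) • P :=
  stmt_2_general V g hnd p hrank htr hgp
end

section
/- Let P, Q be unit timelike vectors in Minkowski space with γ = −g(P,Q) > 0, let p, q be the associated idempotents p(X) = (g(P,X)/g(P,P))P, q(X) = (g(Q,X)/g(Q,Q))Q, and let ϖ(p,q) = (q∘p)/tr(q∘p) − p be the velocity operator. Then for every vector R ∈ V, ϖ(p,q)(R) = (−g(P,R))·w(P,Q), where w(P,Q) = Q/γ − P is the binary relative velocity vector. -/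
section

variable {V : Type*} [AddCommGroup V] [Module ℝ V] (g : LinearMap.BilinForm ℝ V)

theorem obs_apply (P X : V) : obs g P X = ((g P P)⁻¹ * g P X) • P := by
  simp [obs, mul_smul]

theorem obs_comp_obs (P Q : V) :
    obs g Q ∘ₗ obs g P = ((g P P)⁻¹ * (g Q Q)⁻¹ * g Q P) • (g P).smulRight Q := by
  ext X
  simp only [LinearMap.comp_apply, obs_apply, map_smul, LinearMap.smul_apply,
    LinearMap.smulRight_apply, smul_smul]
  ring_nf

theorem trace_obs_comp_obs [FiniteDimensional ℝ V] (P Q : V) :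
    LinearMap.trace ℝ V (obs g Q ∘ₗ obs g P) = (g P P)⁻¹ * (g Q Q)⁻¹ * g Q P * g P Q := by
  rw [obs_comp_obs, map_smul, LinearMap.trace_smulRight, smul_eq_mul]

theorem vel_obs_apply [FiniteDimensional ℝ V] {P Q : V} (hQQ : g Q Q ≠ 0) (hPQ : g P Q ≠ 0)
    (hQP : g Q P ≠ 0) (R : V) :
    vel (obs g P) (obs g Q) R = (g P R / g P P) • ((g P P / g P Q) • Q - P) := by
  -- With `g P P = 0` the junk value `0⁻¹ = 0` makes `obs g P`, hence both sides, vanish.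
  by_cases hPP : g P P = 0
  · simp [vel, obs, hPP]
  rw [vel, trace_obs_comp_obs, obs_comp_obs]
  simp only [LinearMap.sub_apply, LinearMap.smul_apply, LinearMap.smulRight_apply, obs_apply,
    smul_sub, smul_smul]
  congr 2 <;> field_simp

end

theorem stmt_11_general (V : Type*) [AddCommGroup V] [Module ℝ V] [FiniteDimensional ℝ V]
    (g : LinearMap.BilinForm ℝ V) (hsymm : ∀ X Y : V, g X Y = g Y X)
    (P Q : V) (hP : g P P = -1) (hQ : g Q Q = -1) (horient : g P Q < 0) :
    ∀ R : V, vel (obs g P) (obs g Q) R =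
      (-(g P R)) • ((-(g P Q))⁻¹ • Q - P) := by
  intro R
  have hPQ : g P Q ≠ 0 := horient.ne
  rw [vel_obs_apply g (by rw [hQ]; norm_num) hPQ (hsymm Q P ▸ hPQ), hP, div_neg, div_one, neg_div,
    one_div, neg_inv]

theorem stmt_11 (V : Type*) [AddCommGroup V] [Module ℝ V] [FiniteDimensional ℝ V]
    (g : LinearMap.BilinForm ℝ V) (hsymm : ∀ X Y : V, g X Y = g Y X)
    (hnd : g.Nondegenerate)
    (hmink : IsMinkowski g)
    (P Q : V) (hP : g P P = -1) (hQ : g Q Q = -1) (horient : g P Q < 0) :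
    ∀ R : V, vel (obs g P) (obs g Q) R =
      (-(g P R)) • ((-(g P Q))⁻¹ • Q - P) :=
  stmt_11_general V g hsymm P Q hP hQ horient
end

section
/- Let P, Q, R be unit timelike vectors in Minkowski space, all in the same time orientation, with Lorentz factors γ_PQ = −g(P,Q), γ_QR = −g(Q,R), γ_PR = −g(P,R). Then g(w(Q,P), w(Q,R)) = 1 − γ_PR/(γ_PQ·γ_QR), where w(Q,X) = X/(−g(Q,X)) − Q denotes the binary relative velocity of X relative to Q. -/
/-! The relative velocity `w(Q,X) = relVel g Q X` is `g`-orthogonal to `Q`, so in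
`g(w(Q,P), w(Q,R))` the `-Q` part of `w(Q,R)` drops out and only `g(w(Q,P), R) / γ_QR` remains. -/

namespace LinearMap.BilinForm

variable {V : Type*} [AddCommGroup V] [Module ℝ V] (g : LinearMap.BilinForm ℝ V)

noncomputable def relVel (Q X : V) : V := (-(g Q X))⁻¹ • X - Q

variable {g}

theorem apply_relVel_eq_zero {Q X : V} (hQ : g Q Q = -1) (hQX : g Q X ≠ 0) :
    g Q (g.relVel Q X) = 0 := by
  simp only [relVel, map_sub, map_smul, smul_eq_mul, hQ]
  field_simp
  ring

theorem apply_relVel_relVel (hg : g.IsSymm) {Q P R : V} (hQ : g Q Q = -1)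
    (hQP : g Q P ≠ 0) (hQR : g Q R ≠ 0) :
    g (g.relVel Q P) (g.relVel Q R) = 1 + g P R / (g Q P * g Q R) := by
  have horth : g (g.relVel Q P) Q = 0 := (hg.eq _ _).trans (apply_relVel_eq_zero hQ hQP)
  calc g (g.relVel Q P) (g.relVel Q R)
      = (-(g Q R))⁻¹ * g (g.relVel Q P) R := by
        rw [relVel.eq_1 g Q R, map_sub, map_smul, horth, smul_eq_mul, sub_zero]
    _ = 1 + g P R / (g Q P * g Q R) := by
        simp only [relVel, map_sub, LinearMap.sub_apply, map_smul, LinearMap.smul_apply,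
          smul_eq_mul]
        field_simp
        ring

end LinearMap.BilinForm

theorem stmt_12_general (V : Type*) [AddCommGroup V] [Module ℝ V]
    (g : LinearMap.BilinForm ℝ V) (hsymm : ∀ X Y : V, g X Y = g Y X)
    (P Q R : V) (hQ : g Q Q = -1)
    (hPQ : g P Q < 0) (hQR : g Q R < 0) :
    g ((-(g Q P))⁻¹ • P - Q) ((-(g Q R))⁻¹ • R - Q) =
      1 - (-(g P R)) / ((-(g P Q)) * (-(g Q R))) := by
  have hQP : g Q P = g P Q := hsymm Q P
  refine (LinearMap.BilinForm.apply_relVel_relVel ⟨hsymm⟩ hQ (hQP ▸ hPQ.ne) hQR.ne).trans ?_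
  rw [hQP]
  ring

theorem stmt_12 (V : Type*) [AddCommGroup V] [Module ℝ V] [FiniteDimensional ℝ V]
    (g : LinearMap.BilinForm ℝ V) (hsymm : ∀ X Y : V, g X Y = g Y X)
    (hnd : g.Nondegenerate)
    (hmink : IsMinkowski g)
    (P Q R : V) (hP : g P P = -1) (hQ : g Q Q = -1) (hR : g R R = -1)
    (hPQ : g P Q < 0) (hQR : g Q R < 0) (hPR : g P R < 0) :
    g ((-(g Q P))⁻¹ • P - Q) ((-(g Q R))⁻¹ • R - Q) =
      1 - (-(g P R)) / ((-(g P Q)) * (-(g Q R))) :=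
  stmt_12_general V g hsymm P Q R hQ hPQ hQR
end

section
/- Let P, Q, R be g-anisotropic vectors in a finite-dimensional real vector space with nondegenerate symmetric bilinear form g, with associated rank-one idempotents p, q, r, and assume tr(p∘q), tr(q∘r), tr(p∘r), tr(p∘q∘r) are all nonzero. Define ϖ(x,y) = (y∘x)/tr(y∘x) − x for observer idempotents x, y. Then ϖ(p,r) = (tr(pqr)/tr(pr))·( ϖ(p,q) + (1/tr(pq))·ϖ(q,r)∘p ) + (tr(pqr)/tr(pr) − 1)·p, where tr(pqr) = tr(p∘q∘r). -/
/-!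
An observer idempotent `x` has rank one, so `x ∘ A ∘ x = tr(x ∘ A) • x` for every `A`. Applied
to `p ∘ (q ∘ r) ∘ p`, `q ∘ p ∘ q` and `r ∘ q ∘ r` inside `r ∘ q ∘ p ∘ q ∘ r ∘ p`, this gives
`tr(pqr) • (r ∘ q ∘ p) = (tr(pq) * tr(qr)) • (r ∘ p)`, and the composition law is this identity
rewritten in terms of `ϖ`.
-/

open LinearMap

theorem LinearMap.smulRight_comp {R M : Type*} [CommRing R] [AddCommGroup M] [Module R M]
    (f : M →ₗ[R] R) (x : M) (A : M →ₗ[R] M) : f.smulRight x ∘ₗ A = (f ∘ₗ A).smulRight x :=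
  rfl

theorem LinearMap.smulRight_comp_comp_smulRight {R M : Type*} [CommRing R] [AddCommGroup M]
    [Module R M] (f : M →ₗ[R] R) (x : M) (A : M →ₗ[R] M) :
    f.smulRight x ∘ₗ A ∘ₗ f.smulRight x = f (A x) • f.smulRight x := by
  ext v
  simp [smul_smul, mul_comm]

section Observer

variable {V : Type*} [AddCommGroup V] [Module ℝ V] (g : LinearMap.BilinForm ℝ V) (P : V)

theorem obs_eq_smul_smulRight : obs g P = (g P P)⁻¹ • (g P).smulRight P := rfl

theorem obs_comp_comp_obs [FiniteDimensional ℝ V] (A : V →ₗ[ℝ] V) :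
    obs g P ∘ₗ A ∘ₗ obs g P = trace ℝ V (obs g P ∘ₗ A) • obs g P := by
  simp only [obs_eq_smul_smulRight, smul_comp, comp_smul, smulRight_comp_comp_smulRight, map_smul,
    smul_smul]
  rw [smulRight_comp, trace_smulRight, comp_apply, smul_eq_mul]
  congr 1
  ring

end Observer

section ObserverAlgebra

variable {V : Type*} [AddCommGroup V] [Module ℝ V] [FiniteDimensional ℝ V] {p q r : V →ₗ[ℝ] V}

theorem trace_comp_comp_smul_comp
    (hp : ∀ A, p ∘ₗ A ∘ₗ p = trace ℝ V (p ∘ₗ A) • p)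
    (hq : ∀ A, q ∘ₗ A ∘ₗ q = trace ℝ V (q ∘ₗ A) • q)
    (hr : ∀ A, r ∘ₗ A ∘ₗ r = trace ℝ V (r ∘ₗ A) • r) :
    trace ℝ V (p ∘ₗ q ∘ₗ r) • (r ∘ₗ q ∘ₗ p) =
      (trace ℝ V (p ∘ₗ q) * trace ℝ V (q ∘ₗ r)) • (r ∘ₗ p) :=
  calc trace ℝ V (p ∘ₗ q ∘ₗ r) • (r ∘ₗ q ∘ₗ p)
      = r ∘ₗ (q ∘ₗ p ∘ₗ q) ∘ₗ r ∘ₗ p := by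
        rw [← comp_smul, ← comp_smul, ← hp (q ∘ₗ r)]; simp only [comp_assoc]
    _ = trace ℝ V (q ∘ₗ p) • (r ∘ₗ q ∘ₗ r) ∘ₗ p := by
        rw [hq p]; simp only [comp_smul, smul_comp, comp_assoc]
    _ = (trace ℝ V (p ∘ₗ q) * trace ℝ V (q ∘ₗ r)) • (r ∘ₗ p) := by
        rw [hr q, smul_comp, smul_smul, trace_comp_comm' p q, trace_comp_comm' q r]

theorem vel_eq_of_trace_smul_comp
    (hpq : trace ℝ V (p ∘ₗ q) ≠ 0) (hqr : trace ℝ V (q ∘ₗ r) ≠ 0)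
    (h : trace ℝ V (p ∘ₗ q ∘ₗ r) • (r ∘ₗ q ∘ₗ p) =
      (trace ℝ V (p ∘ₗ q) * trace ℝ V (q ∘ₗ r)) • (r ∘ₗ p)) :
    vel p r =
      (trace ℝ V (p ∘ₗ q ∘ₗ r) / trace ℝ V (p ∘ₗ r)) •
        (vel p q + (trace ℝ V (p ∘ₗ q))⁻¹ • (vel q r ∘ₗ p)) +
      (trace ℝ V (p ∘ₗ q ∘ₗ r) / trace ℝ V (p ∘ₗ r) - 1) • p := by
  have hrp : r ∘ₗ p = (trace ℝ V (p ∘ₗ q) * trace ℝ V (q ∘ₗ r))⁻¹ •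
      trace ℝ V (p ∘ₗ q ∘ₗ r) • (r ∘ₗ q ∘ₗ p) := by
    rw [h, inv_smul_smul₀ (mul_ne_zero hpq hqr)]
  simp only [vel, trace_comp_comm' p q, trace_comp_comm' q r, trace_comp_comm' p r, sub_comp,
    smul_comp]
  -- keeps `hrp` from also rewriting the `r ∘ₗ p` inside this trace
  generalize trace ℝ V (r ∘ₗ p) = c
  rw [hrp]
  match_scalars <;> field_simp <;> ring

end ObserverAlgebra

theorem stmt_13_general (V : Type*) [AddCommGroup V] [Module ℝ V] [FiniteDimensional ℝ V]
    (g : LinearMap.BilinForm ℝ V)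
    (P Q R : V)
    (hpq : LinearMap.trace ℝ V (obs g P ∘ₗ obs g Q) ≠ 0)
    (hqr : LinearMap.trace ℝ V (obs g Q ∘ₗ obs g R) ≠ 0) :
    vel (obs g P) (obs g R) =
      (LinearMap.trace ℝ V (obs g P ∘ₗ obs g Q ∘ₗ obs g R) /
        LinearMap.trace ℝ V (obs g P ∘ₗ obs g R)) •
        (vel (obs g P) (obs g Q) +
          (LinearMap.trace ℝ V (obs g P ∘ₗ obs g Q))⁻¹ •
            (vel (obs g Q) (obs g R) ∘ₗ obs g P)) +
      (LinearMap.trace ℝ V (obs g P ∘ₗ obs g Q ∘ₗ obs g R) /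
        LinearMap.trace ℝ V (obs g P ∘ₗ obs g R) - 1) • obs g P :=
  vel_eq_of_trace_smul_comp hpq hqr <|
    trace_comp_comp_smul_comp (obs_comp_comp_obs g P) (obs_comp_comp_obs g Q)
      (obs_comp_comp_obs g R)

theorem stmt_13 (V : Type*) [AddCommGroup V] [Module ℝ V] [FiniteDimensional ℝ V]
    (g : LinearMap.BilinForm ℝ V) (hsymm : ∀ X Y : V, g X Y = g Y X)
    (hnd : g.Nondegenerate)
    (P Q R : V) (hP : g P P ≠ 0) (hQ : g Q Q ≠ 0) (hR : g R R ≠ 0)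
    (hpq : LinearMap.trace ℝ V (obs g P ∘ₗ obs g Q) ≠ 0)
    (hqr : LinearMap.trace ℝ V (obs g Q ∘ₗ obs g R) ≠ 0)
    (hpr : LinearMap.trace ℝ V (obs g P ∘ₗ obs g R) ≠ 0)
    (hpqr : LinearMap.trace ℝ V (obs g P ∘ₗ obs g Q ∘ₗ obs g R) ≠ 0) :
    vel (obs g P) (obs g R) =
      (LinearMap.trace ℝ V (obs g P ∘ₗ obs g Q ∘ₗ obs g R) /
        LinearMap.trace ℝ V (obs g P ∘ₗ obs g R)) •
        (vel (obs g P) (obs g Q) +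
          (LinearMap.trace ℝ V (obs g P ∘ₗ obs g Q))⁻¹ •
            (vel (obs g Q) (obs g R) ∘ₗ obs g P)) +
      (LinearMap.trace ℝ V (obs g P ∘ₗ obs g Q ∘ₗ obs g R) /
        LinearMap.trace ℝ V (obs g P ∘ₗ obs g R) - 1) • obs g P :=
  stmt_13_general V g P Q R hpq hqr
end

section
/- Let P, Q, R, S be g-anisotropic vectors with pairwise nonzero g-pairings, and p, q, r, s their rank-one idempotents. Then the product of velocity operators satisfies ϖ(p,q) ∘ ϖ(r,s) = (1/tr(qp))·( tr(qpsr)/tr(sr) − tr(qpr) )·( r + ϖ(r,q) ) + ( tr(pr) − tr(psr)/tr(sr) )·( r + ϖ(r,p) ), where ϖ(x,y) = (y∘x)/tr(y∘x) − x and tr(xy...) denotes the trace of the composite of the idempotents. -/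
set_option linter.unusedSectionVars false

section Aux
variable {V : Type*} [AddCommGroup V] [Module ℝ V] [FiniteDimensional ℝ V]
  (g : LinearMap.BilinForm ℝ V)

/-- rank-one map `X ↦ g B X • A`. -/
noncomputable def rk1 (A B : V) : V →ₗ[ℝ] V :=
  (LinearMap.toSpanSingleton ℝ V A).comp (g B)

lemma rk1_apply (A B X : V) : rk1 g A B X = g B X • A := rfl

lemma rk1_comp (A B C D : V) :
    rk1 g A B ∘ₗ rk1 g C D = g B C • rk1 g A D := by
  ext X
  simp [rk1_apply, smul_smul, mul_comm]

lemma rk1_trace (A B : V) : LinearMap.trace ℝ V (rk1 g A B) = g B A := by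
  have h : (g B) ∘ₗ LinearMap.toSpanSingleton ℝ V A
      = (g B A) • (LinearMap.id : ℝ →ₗ[ℝ] ℝ) := by
    ext
    simp [LinearMap.toSpanSingleton_apply, mul_comm]
  rw [rk1, LinearMap.trace_comp_comm', h, map_smul, LinearMap.trace_id]
  simp

lemma obs_eq (A : V) : obs g A = (g A A)⁻¹ • rk1 g A A := rfl

lemma obs_comp (A B : V) :
    obs g A ∘ₗ obs g B = ((g A A)⁻¹ * (g B B)⁻¹ * g A B) • rk1 g A B := by
  rw [obs_eq, obs_eq, LinearMap.smul_comp, LinearMap.comp_smul, rk1_comp,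
    smul_smul, smul_smul]

lemma vel_obs (A B : V) (hsymm : ∀ X Y : V, g X Y = g Y X)
    (hA : g A A ≠ 0) (hB : g B B ≠ 0) (hAB : g A B ≠ 0) :
    vel (obs g A) (obs g B) = (g A B)⁻¹ • rk1 g B A - (g A A)⁻¹ • rk1 g A A := by
  rw [vel, obs_comp, map_smul, rk1_trace, smul_smul, smul_eq_mul, obs_eq, hsymm B A]
  match_scalars <;> field_simp <;> ring

end Aux

set_option maxHeartbeats 2000000 in
theorem stmt_17 (V : Type*) [AddCommGroup V] [Module ℝ V] [FiniteDimensional ℝ V]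
    (g : LinearMap.BilinForm ℝ V) (hsymm : ∀ X Y : V, g X Y = g Y X)
    (hnd : g.Nondegenerate)
    (P Q R S : V) (hP : g P P ≠ 0) (hQ : g Q Q ≠ 0) (hR : g R R ≠ 0)
    (hS : g S S ≠ 0) (hPQ : g P Q ≠ 0) (hPR : g P R ≠ 0) (hPS : g P S ≠ 0)
    (hQR : g Q R ≠ 0) (hQS : g Q S ≠ 0) (hRS : g R S ≠ 0) :
    vel (obs g P) (obs g Q) ∘ₗ vel (obs g R) (obs g S) =
      ((LinearMap.trace ℝ V (obs g Q ∘ₗ obs g P))⁻¹ *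
        (LinearMap.trace ℝ V (obs g Q ∘ₗ obs g P ∘ₗ obs g S ∘ₗ obs g R) /
            LinearMap.trace ℝ V (obs g S ∘ₗ obs g R) -
          LinearMap.trace ℝ V (obs g Q ∘ₗ obs g P ∘ₗ obs g R))) •
        (obs g R + vel (obs g R) (obs g Q)) +
      (LinearMap.trace ℝ V (obs g P ∘ₗ obs g R) -
        LinearMap.trace ℝ V (obs g P ∘ₗ obs g S ∘ₗ obs g R) /
          LinearMap.trace ℝ V (obs g S ∘ₗ obs g R)) •
        (obs g R + vel (obs g R) (obs g P)) := by
  have hQP : g Q P ≠ 0 := by rw [hsymm]; exact hPQ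
  have hRP : g R P ≠ 0 := by rw [hsymm]; exact hPR
  have hSP : g S P ≠ 0 := by rw [hsymm]; exact hPS
  have hRQ : g R Q ≠ 0 := by rw [hsymm]; exact hQR
  have hSQ : g S Q ≠ 0 := by rw [hsymm]; exact hQS
  have hSR : g S R ≠ 0 := by rw [hsymm]; exact hRS
  rw [vel_obs g P Q hsymm hP hQ hPQ, vel_obs g R S hsymm hR hS hRS,
    vel_obs g R Q hsymm hR hQ hRQ, vel_obs g R P hsymm hR hP hRP]
  simp only [obs_comp, obs_eq, LinearMap.comp_smul, LinearMap.smul_comp,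
    LinearMap.comp_sub, LinearMap.sub_comp, rk1_comp, map_smul, rk1_trace,
    smul_eq_mul, smul_smul, smul_sub, sub_smul, smul_add, add_smul]
  simp only [hsymm Q P, hsymm R P, hsymm S P, hsymm R Q, hsymm S Q, hsymm S R]
  match_scalars <;> field_simp <;> ring
end

section
/- Let P, Q, R be unit timelike vectors in Minkowski space with the same time orientation, and define the Lorentz factor product identity: (−g(P,Q))·(−g(Q,R))·(1 − g(w(Q,P), w(Q,R))) = −g(P,R), where w(Q,X) = X/(−g(Q,X)) − Q. -/
noncomputable def relVel {K V : Type*} [Field K] [AddCommGroup V] [Module K V]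
    (g : LinearMap.BilinForm K V) (Q X : V) : V :=
  (-(g Q X))⁻¹ • X - Q

theorem relVel_apply_relVel {K V : Type*} [Field K] [AddCommGroup V] [Module K V]
    (g : LinearMap.BilinForm K V) {P Q R : V} (hQ : g Q Q = -1) (hPQ : g P Q = g Q P)
    (hQP : g Q P ≠ 0) (hQR : g Q R ≠ 0) :
    g (relVel g Q P) (relVel g Q R) = 1 + g P R / (g Q P * g Q R) := by
  simp only [relVel, map_sub, map_smul, LinearMap.sub_apply, LinearMap.smul_apply, smul_eq_mul,
    hQ, hPQ]
  field_simp
  ring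

theorem stmt_18_general (V : Type*) [AddCommGroup V] [Module ℝ V]
    (g : LinearMap.BilinForm ℝ V) (hsymm : ∀ X Y : V, g X Y = g Y X)
    (P Q R : V) (hQ : g Q Q = -1)
    (hPQ : g P Q < 0) (hQR : g Q R < 0) :
    (-(g P Q)) * (-(g Q R)) *
      (1 - g ((-(g Q P))⁻¹ • P - Q) ((-(g Q R))⁻¹ • R - Q)) = -(g P R) := by
  have hQP : g Q P = g P Q := hsymm Q P
  have hw : g (relVel g Q P) (relVel g Q R) = 1 + g P R / (g Q P * g Q R) :=
    relVel_apply_relVel g hQ (hsymm P Q) (hQP ▸ hPQ.ne) hQR.ne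
  rw [show g ((-(g Q P))⁻¹ • P - Q) ((-(g Q R))⁻¹ • R - Q) = _ from hw, hQP]
  field_simp [hPQ.ne, hQR.ne]
  ring

theorem stmt_18 (V : Type*) [AddCommGroup V] [Module ℝ V] [FiniteDimensional ℝ V]
    (g : LinearMap.BilinForm ℝ V) (hsymm : ∀ X Y : V, g X Y = g Y X)
    (hnd : g.Nondegenerate)
    (hmink : IsMinkowski g)
    (P Q R : V) (hP : g P P = -1) (hQ : g Q Q = -1) (hR : g R R = -1)
    (hPQ : g P Q < 0) (hQR : g Q R < 0) (hPR : g P R < 0) :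
    (-(g P Q)) * (-(g Q R)) *
      (1 - g ((-(g Q P))⁻¹ • P - Q) ((-(g Q R))⁻¹ • R - Q)) = -(g P R) :=
  stmt_18_general V g hsymm P Q R hQ hPQ hQR
end
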